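/- arXiv:2002.11229 — 2 statements merged into one kernel-verified Lean document; each statement's English description precedes it below -/
import Mathlib

section
/- For non-negative integers n and t with t ≤ n, the sum ∑_{k=0}^{t} q^{k(n−t)} / ((q^{−k};q)_k (q;q)_{t−k}) equals the q-binomial coefficient [n choose t]_q. -/
/-!
Replace `q^(n-t)` by a free variable `x` and write `S_t(x)` for the resulting sum over
`i + j = t`. Splitting `1 - q^(i+j) = q^i (1 - q^j) + (1 - q^i)` and shifting `j`, resp. `i`,
by one gives `S_{t+1}(x) (1 - q^(t+1)) = (1 - q x) S_t(q x)`, which is also the recurrence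
satisfied by `(q x; q)_t / (q; q)_t`; both equal `1` at `t = 0`.
-/

open Finset

/-- The indeterminate `q` in the field of rational functions `ℚ(q)`. -/
noncomputable def q : RatFunc ℚ := RatFunc.X

/-- The q-shifted factorial `(a;q)_m = ∏_{l=0}^{m-1} (1 - a q^l)`. -/
noncomputable def qPoch (a : RatFunc ℚ) (m : ℕ) : RatFunc ℚ :=
  ∏ l ∈ Finset.range m, (1 - a * q ^ l)

lemma q_ne_zero : q ≠ 0 := RatFunc.X_ne_zero

lemma q_pow_ne_one {n : ℕ} (hn : n ≠ 0) : q ^ n ≠ 1 := by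
  intro h
  have hdeg := congrArg RatFunc.intDegree h
  rw [q, ← RatFunc.algebraMap_X, ← map_pow, RatFunc.intDegree_polynomial,
    Polynomial.natDegree_X_pow, RatFunc.intDegree_one] at hdeg
  exact hn (Int.ofNat_eq_zero.mp hdeg)

lemma one_sub_q_pow_ne_zero {n : ℕ} (hn : n ≠ 0) : 1 - q ^ n ≠ 0 :=
  sub_ne_zero.mpr (q_pow_ne_one hn).symm

lemma qPoch_zero (a : RatFunc ℚ) : qPoch a 0 = 1 := prod_range_zero _

lemma qPoch_succ (a : RatFunc ℚ) (m : ℕ) : qPoch a (m + 1) = qPoch a m * (1 - a * q ^ m) :=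
  prod_range_succ _ m

lemma qPoch_succ' (a : RatFunc ℚ) (m : ℕ) : qPoch a (m + 1) = (1 - a) * qPoch (q * a) m := by
  rw [qPoch, prod_range_succ', qPoch, mul_comm]
  simp only [pow_succ, pow_zero, mul_one]
  congr 1
  exact prod_congr rfl fun _ _ => by ring

lemma inv_qPoch_q_succ_mul (j : ℕ) :
    (qPoch q (j + 1))⁻¹ * (1 - q ^ (j + 1)) = (qPoch q j)⁻¹ := by
  rw [qPoch_succ, ← pow_succ', mul_inv,
    inv_mul_cancel_right₀ (one_sub_q_pow_ne_zero j.succ_ne_zero)]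

lemma inv_qPoch_zpow_neg_succ_mul (i : ℕ) :
    (qPoch (q ^ (-((i + 1 : ℕ) : ℤ))) (i + 1))⁻¹ * (1 - q ^ (i + 1)) =
      -q ^ (i + 1) * (qPoch (q ^ (-(i : ℤ))) i)⁻¹ := by
  have hq : q ^ (i + 1) ≠ 0 := pow_ne_zero _ q_ne_zero
  have hq1 : q ^ (i + 1) - 1 ≠ 0 := sub_ne_zero.mpr (q_pow_ne_one i.succ_ne_zero)
  have hshift : q * (q ^ (i + 1))⁻¹ = (q ^ i)⁻¹ := by
    rw [pow_succ', mul_inv, mul_inv_cancel_left₀ q_ne_zero]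
  simp only [zpow_neg, zpow_natCast]
  rw [qPoch_succ', hshift, mul_inv, mul_comm, ← mul_assoc]
  congr 1
  field_simp
  ring

/-- Indexing by `i + j = t` instead of `k, t - k` avoids truncated subtraction. -/
noncomputable def qSum (t : ℕ) (x : RatFunc ℚ) : RatFunc ℚ :=
  ∑ p ∈ antidiagonal t, x ^ p.1 / (qPoch (q ^ (-(p.1 : ℤ))) p.1 * qPoch q p.2)

lemma qSum_succ_mul (t : ℕ) (x : RatFunc ℚ) :
    qSum (t + 1) x * (1 - q ^ (t + 1)) = (1 - q * x) * qSum t (q * x) := by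
  have hsplit : ∀ p ∈ antidiagonal (t + 1),
      x ^ p.1 / (qPoch (q ^ (-(p.1 : ℤ))) p.1 * qPoch q p.2) * (1 - q ^ (t + 1)) =
        (q * x) ^ p.1 * (qPoch (q ^ (-(p.1 : ℤ))) p.1)⁻¹ * ((qPoch q p.2)⁻¹ * (1 - q ^ p.2)) +
          x ^ p.1 * ((qPoch (q ^ (-(p.1 : ℤ))) p.1)⁻¹ * (1 - q ^ p.1)) * (qPoch q p.2)⁻¹ := by
    intro p hp
    rw [← mem_antidiagonal.mp hp, pow_add]
    ring
  rw [qSum, sum_mul, sum_congr rfl hsplit, sum_add_distrib, Nat.sum_antidiagonal_succ',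
    Nat.sum_antidiagonal_succ]
  simp only [pow_zero, sub_self, mul_zero, zero_mul, zero_add, inv_qPoch_q_succ_mul,
    inv_qPoch_zpow_neg_succ_mul]
  rw [qSum, ← sum_add_distrib, mul_sum]
  exact sum_congr rfl fun p _ => by ring

theorem qSum_eq (t : ℕ) (x : RatFunc ℚ) : qSum t x = qPoch (q * x) t / qPoch q t := by
  induction t generalizing x with
  | zero => simp [qSum, qPoch_zero]
  | succ t ih =>
    calc qSum (t + 1) x = (1 - q * x) * qSum t (q * x) / (1 - q ^ (t + 1)) := by
          rw [← qSum_succ_mul, mul_div_cancel_right₀ _ (one_sub_q_pow_ne_zero t.succ_ne_zero)]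
      _ = qPoch (q * x) (t + 1) / qPoch q (t + 1) := by
          rw [ih, qPoch_succ', qPoch_succ q t, ← pow_succ']
          simp only [div_eq_mul_inv, mul_inv]
          ring

theorem sum_eq_qBinomial_general (n t : ℕ) :
    ∑ k ∈ Finset.range (t + 1),
        q ^ (k * (n - t)) / (qPoch (q ^ (-(k : ℤ))) k * qPoch q (t - k)) =
      qPoch (q ^ (n - t + 1)) t / qPoch q t := by
  have h := qSum_eq t (q ^ (n - t))
  rw [qSum, Nat.sum_antidiagonal_eq_sum_range_succ_mk, ← pow_succ'] at h
  simpa only [← pow_mul'] using h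

/-- For `t ≤ n`, `∑_{k=0}^{t} q^{k(n-t)} / ((q^{-k};q)_k (q;q)_{t-k}) = [n choose t]_q`,
where `[n choose t]_q = (q^{n-t+1};q)_t / (q;q)_t`. -/
theorem sum_eq_qBinomial (n t : ℕ) (h : t ≤ n) :
    ∑ k ∈ Finset.range (t + 1),
        q ^ (k * (n - t)) / (qPoch (q ^ (-(k : ℤ))) k * qPoch q (t - k)) =
      qPoch (q ^ (n - t + 1)) t / qPoch q t :=
  sum_eq_qBinomial_general n t
end

section
/- Telescoping step: with J = {k_1 < k_2 < ⋯ < k_s} ⊆ I ⊆ {1,…,n} and t_{k_i} := (−1)^{|J|} q^{∑_{j=k_i+1}^{n} a_j + L_{I∖{k_i}, J∖{k_i}}(a^{(k_i)})}, one has t_{k_{i−1}} = q^{a_{k_i}} t_{k_i} for all 2 ≤ i ≤ s; equivalently, ∑_{j=k_{i−1}+1}^{n} a_j + L_{I∖{k_{i−1}}, J∖{k_{i−1}}}(a^{(k_{i−1})}) = ∑_{j=k_i+1}^{n} a_j + L_{I∖{k_i}, J∖{k_i}}(a^{(k_i)}) + a_{k_i}. -/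
open Finset

/-- For `i ∈ J ⊆ I`, the quantity `L_{I∖{i},J∖{i}}(a^{(i)})`, computed via the reindexing
convention: `∑_{(u,v) : u ∈ I∖{i}, u ≤ v ≤ n, v ∉ J∖{i}, v ≠ i} a_v`. -/
def LsumDel {n : ℕ} (i : Fin n) (I J : Finset (Fin n)) (a : Fin n → ℤ) : ℤ :=
  ∑ u ∈ I.erase i, ∑ v ∈ Finset.univ.filter (fun v => u ≤ v ∧ v ∉ J.erase i ∧ v ≠ i), a v

/-- Telescoping step: if `p < k` are consecutive elements of `J ⊆ I`, then
`∑_{j=p+1}^{n} a_j + L_{I∖{p},J∖{p}}(a^{(p)})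
  = ∑_{j=k+1}^{n} a_j + L_{I∖{k},J∖{k}}(a^{(k)}) + a_k`. -/
theorem telescoping_step (n : ℕ) (I J : Finset (Fin n)) (hJI : J ⊆ I)
    (a : Fin n → ℤ) (p k : Fin n) (hp : p ∈ J) (hk : k ∈ J) (hpk : p < k)
    (hconsec : ∀ j ∈ J, ¬(p < j ∧ j < k)) :
    (∑ j ∈ Finset.univ.filter (fun j => p < j), a j) + LsumDel p I J a =
      (∑ j ∈ Finset.univ.filter (fun j => k < j), a j) + LsumDel k I J a + a k := by
  classical
  set S : Fin n → ℤ := fun u => ∑ v ∈ Finset.univ.filter (fun v => u ≤ v ∧ v ∉ J), a v with hS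
  have hL : ∀ i ∈ J, LsumDel i I J a = ∑ u ∈ I.erase i, S u := by
    intro i hi
    unfold LsumDel
    refine Finset.sum_congr rfl fun u _ => ?_
    refine Finset.sum_congr ?_ fun _ _ => rfl
    ext v
    simp only [Finset.mem_filter, Finset.mem_univ, true_and, Finset.mem_erase]
    constructor
    · rintro ⟨h1, h2, h3⟩
      exact ⟨h1, fun hv => h2 ⟨h3, hv⟩⟩
    · rintro ⟨h1, h2⟩
      exact ⟨h1, fun h => h2 h.2, fun hvi => h2 (hvi ▸ hi)⟩
  have hpI : p ∈ I := hJI hp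
  have hkI : k ∈ I := hJI hk
  have hErase : ∀ i ∈ I, ∑ u ∈ I.erase i, S u = (∑ u ∈ I, S u) - S i := by
    intro i hi
    rw [← Finset.add_sum_erase I S hi]; ring
  set D : ℤ := ∑ v ∈ Finset.univ.filter (fun v => p < v ∧ v < k), a v with hD
  have hSpk : S p = S k + D := by
    have hsplit : Finset.univ.filter (fun v => p ≤ v ∧ v ∉ J)
        = Finset.univ.filter (fun v => k ≤ v ∧ v ∉ J)
          ∪ Finset.univ.filter (fun v => p < v ∧ v < k) := by
      ext v
      simp only [Finset.mem_union, Finset.mem_filter, Finset.mem_univ, true_and]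
      constructor
      · rintro ⟨h1, h2⟩
        rcases lt_or_ge v k with h | h
        · exact Or.inr ⟨lt_of_le_of_ne h1 (fun e => h2 (e ▸ hp)), h⟩
        · exact Or.inl ⟨h, h2⟩
      · rintro (⟨h1, h2⟩ | ⟨h1, h2⟩)
        · exact ⟨le_trans hpk.le h1, h2⟩
        · exact ⟨h1.le, fun hv => hconsec v hv ⟨h1, h2⟩⟩
    have hdisj : Disjoint (Finset.univ.filter (fun v => k ≤ v ∧ v ∉ J))
        (Finset.univ.filter (fun v => p < v ∧ v < k)) := by
      rw [Finset.disjoint_left]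
      intro v hv1 hv2
      simp only [Finset.mem_filter] at hv1 hv2
      exact absurd hv1.2.1 (not_le.mpr hv2.2.2)
    simp only [hS]
    rw [hsplit, Finset.sum_union hdisj]
  have hkni : k ∉ Finset.univ.filter (fun j => k < j) := by simp
  have hdisj2 : Disjoint (insert k (Finset.univ.filter (fun j => k < j)))
      (Finset.univ.filter (fun v => p < v ∧ v < k)) := by
    rw [Finset.disjoint_left]
    intro v hv1 hv2
    simp only [Finset.mem_insert, Finset.mem_filter, Finset.mem_univ, true_and] at hv1 hv2
    rcases hv1 with rfl | h
    · exact absurd hv2.2 (lt_irrefl v)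
    · exact absurd (h.trans hv2.2) (lt_irrefl k)
  have hTpk : (∑ j ∈ Finset.univ.filter (fun j => p < j), a j)
      = (∑ j ∈ Finset.univ.filter (fun j => k < j), a j) + a k + D := by
    have hsplit : Finset.univ.filter (fun j => p < j)
        = insert k (Finset.univ.filter (fun j => k < j))
          ∪ Finset.univ.filter (fun v => p < v ∧ v < k) := by
      ext v
      simp only [Finset.mem_union, Finset.mem_insert, Finset.mem_filter, Finset.mem_univ,
        true_and]
      constructor
      · intro h1
        rcases lt_trichotomy v k with h | h | h
        · exact Or.inr ⟨h1, h⟩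
        · exact Or.inl (Or.inl h)
        · exact Or.inl (Or.inr h)
      · rintro ((rfl | h) | ⟨h, _⟩)
        · exact hpk
        · exact hpk.trans h
        · exact h
    rw [hsplit, Finset.sum_union hdisj2, Finset.sum_insert hkni]
    ring
  rw [hL p hp, hL k hk, hErase p hpI, hErase k hkI, hSpk, hTpk]
  ring
end
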